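/- For every affine scheme X of finite type over ℚ there exist a natural number n and a polynomial g ∈ ℚ[x_1,…,x_n] of total degree exactly 4 such that there is a bijection between the set of ℚ-points X(ℚ) (i.e., ℚ-morphisms Spec ℚ → X) and the set {y ∈ ℚ^n : g(y) = 0}. -/

import Mathlib

/-!
A `ℚ`-point of an affine `X` of finite type is a ring map `Γ(X, ⊤) → ℚ`, and
`Γ(X, ⊤) ≅ ℚ[x₁, …, xₘ] ⧸ (f₁, …, fₖ)`, so `X(ℚ)` is the common zero set of the `fⱼ`.
Adding a variable `z_α` for every exponent vector `α` with entries at most `D ≥ deg fⱼ`,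
subject to the quadratic relations `z₀ = 1` and `z_α = xᵢ z_{α - eᵢ}`, forces `z_α = x^α` and
makes every `fⱼ` linear in the `z_α`; this gives a system of quadrics `q_t` with the same
solutions. Over an ordered ring the system is equivalent to the single equation
`∑ q_t² = 0` of degree at most `4`, and adding `u⁴` for a fresh variable `u` makes the degree
exactly `4` without changing the solutions.
-/

open AlgebraicGeometry CategoryTheory MvPolynomial

namespace MvPolynomial

variable {R σ ι : Type*} [CommRing R]

section Quadratization

variable (D : ℕ)

def monomialValue [Fintype σ] (y : σ → R) (α : σ → Fin (D + 1)) : R := ∏ i, y i ^ (α i : ℕ)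

lemma monomialValue_zero [Fintype σ] (y : σ → R) : monomialValue D y 0 = 1 := by
  simp [monomialValue]

lemma monomialValue_eq_mul_update [Fintype σ] [DecidableEq σ] (y : σ → R)
    (α : σ → Fin (D + 1)) {i : σ} (hi : α i ≠ 0) :
    monomialValue D y α = y i * monomialValue D y (Function.update α i (α i - 1)) := by
  have hsucc : (α i : ℕ) = ((α i - 1 : Fin (D + 1)) : ℕ) + 1 := by
    rw [Fin.coe_sub_one, if_neg hi]
    have := Fin.pos_iff_ne_zero.mpr hi
    omega
  have hrest : ∏ j ∈ {i}ᶜ, y j ^ ((Function.update α i (α i - 1) j : Fin (D + 1)) : ℕ) =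
      ∏ j ∈ {i}ᶜ, y j ^ (α j : ℕ) :=
    Finset.prod_congr rfl fun j hj => by rw [Function.update_of_ne (by simpa using hj)]
  simp only [monomialValue, Fintype.prod_eq_mul_prod_compl i, Function.update_self, hrest]
  rw [hsucc]
  ring

/-- `Fin.clamp` only serves to land in `Fin (D + 1)`: it does not change the exponents of a
polynomial of total degree at most `D`. -/
noncomputable def linearize (p : MvPolynomial σ R) : MvPolynomial (σ ⊕ (σ → Fin (D + 1))) R :=
  ∑ d ∈ p.support, C (coeff d p) * X (.inr fun i => Fin.clamp (d i) D)

lemma eval_linearize [Fintype σ] {p : MvPolynomial σ R} (hp : p.totalDegree ≤ D)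
    {z : σ ⊕ (σ → Fin (D + 1)) → R} (hz : ∀ α, z (.inr α) = monomialValue D (z ∘ .inl) α) :
    eval z (linearize D p) = eval (z ∘ .inl) p := by
  rw [linearize, map_sum, eval_eq']
  refine Finset.sum_congr rfl fun d hd => ?_
  have hdeg (i : σ) : d i ≤ D :=
    (monomial_le_degreeOf i hd).trans ((degreeOf_le_totalDegree p i).trans hp)
  simp [hz, monomialValue, Fin.clamp, hdeg]

lemma totalDegree_linearize_le [Nontrivial R] (p : MvPolynomial σ R) :
    (linearize D p).totalDegree ≤ 1 :=
  (totalDegree_finsetSum _ _).trans <| Finset.sup_le fun d _ =>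
    (totalDegree_mul _ _).trans (by simp [totalDegree_X, totalDegree_C])

/-- The `if` drops the relation for `α i = 0`, where `α i - 1` would wrap around in `Fin`. -/
noncomputable def monomialRelation [DecidableEq σ] :
    Option ((σ → Fin (D + 1)) × σ) → MvPolynomial (σ ⊕ (σ → Fin (D + 1))) R
  | none => X (.inr 0) - 1
  | some (α, i) =>
    if α i = 0 then 0 else X (.inr α) - X (.inl i) * X (.inr (Function.update α i (α i - 1)))

lemma monomialRelation_eq_zero_iff [Fintype σ] [DecidableEq σ] (z : σ ⊕ (σ → Fin (D + 1)) → R) :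
    (∀ r, eval z (monomialRelation D r) = 0) ↔
      ∀ α, z (.inr α) = monomialValue D (z ∘ .inl) α := by
  constructor
  · intro hz α
    induction α using WellFoundedLT.induction with
    | ind α ih =>
      by_cases h0 : α = 0
      · subst h0
        simpa [monomialRelation, monomialValue_zero, sub_eq_zero] using hz none
      · obtain ⟨i, hi⟩ : ∃ i, α i ≠ 0 := Function.ne_iff.mp h0
        have hlt : Function.update α i (α i - 1) < α :=
          update_lt_self_iff.2 (Fin.sub_one_lt_iff.2 (Fin.pos_iff_ne_zero.2 hi))
        have hrel := hz (some (α, i))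
        simp only [monomialRelation, if_neg hi, map_sub, map_mul, eval_X, sub_eq_zero] at hrel
        rw [hrel, ih _ hlt, monomialValue_eq_mul_update D _ α hi, Function.comp_apply]
  · rintro hz (_ | ⟨α, i⟩)
    · simp [monomialRelation, hz, monomialValue_zero]
    · by_cases hi : α i = 0
      · simp [monomialRelation, hi]
      · simp [monomialRelation, hi, hz, monomialValue_eq_mul_update D _ α hi]

lemma totalDegree_monomialRelation_le [Nontrivial R] [DecidableEq σ]
    (r : Option ((σ → Fin (D + 1)) × σ)) : (monomialRelation (R := R) D r).totalDegree ≤ 2 := by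
  rcases r with _ | ⟨α, i⟩
  · exact (totalDegree_sub_C_le _ _).trans (by simp [totalDegree_X])
  · simp only [monomialRelation]
    split_ifs
    · simp
    · refine (totalDegree_sub _ _).trans (max_le (by simp [totalDegree_X]) ?_)
      exact (totalDegree_mul _ _).trans (by simp [totalDegree_X])

noncomputable def quadraticSystem [DecidableEq σ] (f : ι → MvPolynomial σ R) :
    Option ((σ → Fin (D + 1)) × σ) ⊕ ι → MvPolynomial (σ ⊕ (σ → Fin (D + 1))) R :=
  Sum.elim (monomialRelation D) (linearize D ∘ f)

lemma totalDegree_quadraticSystem_le [Nontrivial R] [DecidableEq σ] (f : ι → MvPolynomial σ R)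
    (t : Option ((σ → Fin (D + 1)) × σ) ⊕ ι) : (quadraticSystem D f t).totalDegree ≤ 2 := by
  rcases t with r | j
  · exact totalDegree_monomialRelation_le D r
  · exact (totalDegree_linearize_le D (f j)).trans one_le_two

def zerosEquivQuadraticSystemZeros [Fintype σ] [DecidableEq σ] {f : ι → MvPolynomial σ R}
    (hf : ∀ j, (f j).totalDegree ≤ D) :
    {y : σ → R // ∀ j, eval y (f j) = 0} ≃
      {z : σ ⊕ (σ → Fin (D + 1)) → R // ∀ t, eval z (quadraticSystem D f t) = 0} where
  toFun y := ⟨Sum.elim y.1 (monomialValue D y.1), by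
    have hmon := (monomialRelation_eq_zero_iff D (Sum.elim y.1 (monomialValue D y.1))).2
      fun _ => rfl
    rintro (r | j)
    · exact hmon r
    · exact (eval_linearize D (hf j) fun _ => rfl).trans (y.2 j)⟩
  invFun z := ⟨z.1 ∘ .inl, fun j => by
    have hmon := (monomialRelation_eq_zero_iff D z.1).1 fun r => z.2 (.inl r)
    exact (eval_linearize D (hf j) hmon).symm.trans (z.2 (.inr j))⟩
  left_inv y := rfl
  right_inv z := by
    have hmon := (monomialRelation_eq_zero_iff D z.1).1 fun r => z.2 (.inl r)
    ext (i | α)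
    · rfl
    · exact (hmon α).symm

end Quadratization

lemma totalDegree_sum_sq_le [Fintype ι] {q : ι → MvPolynomial σ R} {d : ℕ}
    (hq : ∀ t, (q t).totalDegree ≤ d) : (∑ t, q t ^ 2).totalDegree ≤ 2 * d :=
  (totalDegree_finsetSum _ _).trans <| Finset.sup_le fun t _ =>
    (totalDegree_pow _ _).trans (Nat.mul_le_mul_left 2 (hq t))

lemma totalDegree_rename_some_add_X_none_pow [Nontrivial R] {g : MvPolynomial σ R} {k : ℕ}
    (hg : g.totalDegree ≤ k) : (rename some g + X none ^ k).totalDegree = k := by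
  classical
  refine le_antisymm ((totalDegree_add _ _).trans (max_le ?_ ?_)) ?_
  · exact (totalDegree_rename_le _ _).trans hg
  · simp [totalDegree_X_pow]
  · rcases Nat.eq_zero_or_pos k with rfl | hk
    · exact Nat.zero_le _
    have hcoeff : coeff (Finsupp.single none k) (rename some g + X none ^ k) = 1 := by
      rw [coeff_add, coeff_rename_eq_zero, coeff_X_pow, if_pos rfl, zero_add]
      intro u hu
      have := congrArg (· none) hu
      simp [Finsupp.mapDomain_of_notMem_range] at this
      omega
    have := le_totalDegree (mem_support_iff.mpr (hcoeff ▸ one_ne_zero))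
    rwa [Finsupp.sum_single_index rfl] at this

def zerosRenameEquiv {τ : Type*} (e : σ ≃ τ) (g : MvPolynomial σ R) :
    {y : σ → R // eval y g = 0} ≃ {y : τ → R // eval y (rename e g) = 0} :=
  (e.arrowCongr (Equiv.refl R)).subtypeEquiv fun y => by
    simp [eval_rename, Function.comp_def]

section Ordered

variable [LinearOrder R] [IsStrictOrderedRing R]

lemma eval_sum_sq_nonneg [Fintype ι] (q : ι → MvPolynomial σ R) (z : σ → R) :
    0 ≤ eval z (∑ t, q t ^ 2) := by
  simpa using Finset.sum_nonneg fun t _ => sq_nonneg (eval z (q t))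

lemma eval_sum_sq_eq_zero_iff [Fintype ι] (q : ι → MvPolynomial σ R) (z : σ → R) :
    eval z (∑ t, q t ^ 2) = 0 ↔ ∀ t, eval z (q t) = 0 := by
  simp [Finset.sum_eq_zero_iff_of_nonneg fun t _ => sq_nonneg (eval z (q t))]

lemma eval_rename_some_add_X_none_pow_eq_zero_iff {g : MvPolynomial σ R}
    (hg : ∀ y, 0 ≤ eval y g) {k : ℕ} (hk : Even k) (hk0 : k ≠ 0) (z : Option σ → R) :
    eval z (rename some g + X none ^ k) = 0 ↔ eval (z ∘ some) g = 0 ∧ z none = 0 := by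
  rw [map_add, eval_rename, add_eq_zero_iff_of_nonneg (hg _) (by simpa using hk.pow_nonneg _)]
  simp [hk0]

def zerosRenameSomeAddXNonePowEquiv {g : MvPolynomial σ R} (hg : ∀ y, 0 ≤ eval y g) {k : ℕ}
    (hk : Even k) (hk0 : k ≠ 0) :
    {z : Option σ → R // eval z (rename some g + X none ^ k) = 0} ≃
      {y : σ → R // eval y g = 0} where
  toFun z := ⟨z.1 ∘ some, ((eval_rename_some_add_X_none_pow_eq_zero_iff hg hk hk0 _).1 z.2).1⟩
  invFun y := ⟨fun o => o.elim 0 y.1,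
    (eval_rename_some_add_X_none_pow_eq_zero_iff hg hk hk0 _).2 ⟨y.2, rfl⟩⟩
  left_inv z := by
    ext (_ | i)
    · exact ((eval_rename_some_add_X_none_pow_eq_zero_iff hg hk hk0 _).1 z.2).2.symm
    · rfl
  right_inv y := rfl

theorem exists_totalDegree_eq_four_zeros_equiv [Finite σ] [Finite ι] (f : ι → MvPolynomial σ R) :
    ∃ (n : ℕ) (g : MvPolynomial (Fin n) R), g.totalDegree = 4 ∧
      Nonempty ({y : σ → R // ∀ j, eval y (f j) = 0} ≃ {y : Fin n → R // eval y g = 0}) := by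
  classical
  have := Fintype.ofFinite σ
  have := Fintype.ofFinite ι
  obtain ⟨D, hD⟩ : ∃ D, ∀ j, (f j).totalDegree ≤ D :=
    ⟨_, fun j => Finset.le_sup (f := fun j => (f j).totalDegree) (Finset.mem_univ j)⟩
  set q := quadraticSystem D f
  set g := rename some (∑ t, q t ^ 2) + X none ^ 4
  let e := Fintype.equivFin (Option (σ ⊕ (σ → Fin (D + 1))))
  have hg : g.totalDegree = 4 := totalDegree_rename_some_add_X_none_pow
    (totalDegree_sum_sq_le (totalDegree_quadraticSystem_le D f))
  refine ⟨_, renameEquiv R e g, by rwa [totalDegree_renameEquiv], ⟨?_⟩⟩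
  exact (zerosEquivQuadraticSystemZeros D hD).trans <|
    (Equiv.subtypeEquivRight fun z => (eval_sum_sq_eq_zero_iff q z).symm).trans <|
    (zerosRenameSomeAddXNonePowEquiv (eval_sum_sq_nonneg q) ⟨2, rfl⟩ four_ne_zero).symm.trans <|
    zerosRenameEquiv e g

end Ordered

noncomputable def algHomEquivZerosOfSurjective {A S : Type*} [CommRing A] [CommRing S]
    [Algebra R A] [Algebra R S] (π : MvPolynomial σ R →ₐ[R] A) (hπ : Function.Surjective π)
    {s : Set (MvPolynomial σ R)} (hs : Ideal.span s = RingHom.ker π) :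
    (A →ₐ[R] S) ≃ {y : σ → S // ∀ p : s, aeval y (p : MvPolynomial σ R) = 0} where
  toFun ψ := ⟨ψ ∘ π ∘ X, fun p => by
    have hp : π p = 0 := by
      rw [← RingHom.mem_ker, ← hs]
      exact Ideal.subset_span p.2
    change aeval (⇑(ψ.comp π) ∘ X) (p : MvPolynomial σ R) = 0
    rw [← aeval_unique, AlgHom.comp_apply, hp, map_zero]⟩
  invFun y := AlgHom.liftOfSurjective π hπ (aeval y.1) <| by
    change RingHom.ker π ≤ _
    rw [← hs, Ideal.span_le]
    exact fun p hp => y.2 ⟨p, hp⟩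
  left_inv ψ := by
    refine (AlgHom.cancel_right hπ).1 ?_
    dsimp only
    rw [AlgHom.liftOfSurjective_comp]
    exact (aeval_unique (ψ.comp π)).symm
  right_inv y := by
    ext i
    simp

end MvPolynomial

theorem Algebra.FinitePresentation.exists_algHom_equiv_zeros (R A S : Type*) [CommRing R]
    [CommRing A] [CommRing S] [Algebra R A] [Algebra R S] [Algebra.FinitePresentation R A] :
    ∃ (m : ℕ) (s : Finset (MvPolynomial (Fin m) R)), Nonempty
      ((A →ₐ[R] S) ≃ {y : Fin m → S // ∀ p : s, aeval y (p : MvPolynomial (Fin m) R) = 0}) := by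
  obtain ⟨m, π, hπ, s, hs⟩ := Algebra.FinitePresentation.out (R := R) (A := A)
  exact ⟨m, s, ⟨algHomEquivZerosOfSurjective π hπ hs⟩⟩

namespace AlgebraicGeometry

noncomputable def Scheme.homSpecEquivOfIsAffine (X : Scheme) [IsAffine X] (R : CommRingCat) :
    (Spec R ⟶ X) ≃ (Γ(X, ⊤) →+* R) :=
  ((Iso.refl _).homCongr X.isoSpec).trans
    (Spec.homEquiv.trans (ConcreteCategory.homEquiv (C := CommRingCat)))

instance subsingleton_Spec_hom_Spec {R : CommRingCat} [Subsingleton (R →+* R)] :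
    Subsingleton (Spec R ⟶ Spec R) :=
  (Spec.homEquiv.trans (ConcreteCategory.homEquiv (C := CommRingCat))).subsingleton

lemma LocallyOfFiniteType.finiteType_ΓSpecIso_inv_comp_appTop {X : Scheme} [IsAffine X]
    {R : CommRingCat} (f : X ⟶ Spec R) [LocallyOfFiniteType f] :
    ((Scheme.ΓSpecIso R).inv ≫ f.appTop).hom.FiniteType :=
  (HasRingHomProperty.appTop @LocallyOfFiniteType f ‹_›).comp
    (RingHom.FiniteType.of_surjective _
      (Scheme.ΓSpecIso R).commRingCatIsoToRingEquiv.symm.surjective)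

end AlgebraicGeometry

theorem affine_finite_type_points_equiv_degree_four_hypersurface_general
    (X : Scheme) [IsAffine X] (pX : X ⟶ Spec (CommRingCat.of ℚ))
    (hft : LocallyOfFiniteType pX) :
    ∃ (n : ℕ) (g : MvPolynomial (Fin n) ℚ), g.totalDegree = 4 ∧
      Nonempty ({t : Spec (CommRingCat.of ℚ) ⟶ X // t ≫ pX = 𝟙 _}
        ≃ {y : Fin n → ℚ // eval y g = 0}) := by
  let _ : Algebra ℚ Γ(X, ⊤) := ((Scheme.ΓSpecIso _).inv ≫ pX.appTop).hom.toAlgebra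
  have : Algebra.FinitePresentation ℚ Γ(X, ⊤) :=
    Algebra.FinitePresentation.of_finiteType.mp hft.finiteType_ΓSpecIso_inv_comp_appTop
  obtain ⟨m, s, ⟨e⟩⟩ := Algebra.FinitePresentation.exists_algHom_equiv_zeros ℚ Γ(X, ⊤) ℚ
  obtain ⟨n, g, hg, ⟨E⟩⟩ :=
    exists_totalDegree_eq_four_zeros_equiv fun p : s => (p : MvPolynomial (Fin m) ℚ)
  exact ⟨n, g, hg, ⟨(Equiv.subtypeUnivEquiv fun _ => Subsingleton.elim _ _).trans <|
    (X.homSpecEquivOfIsAffine _).trans <| (RingHom.equivRatAlgHom _ _).trans <| e.trans E⟩⟩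

/-- **Conclusion of the reduction to degree 4.** For every affine scheme `X` of finite
type over `ℚ`, there are an `n` and a polynomial `g ∈ ℚ[x_1,…,x_n]` of total degree
exactly `4` such that the set of `ℚ`-points of `X` is in bijection with the set of
rational zeros of `g`. -/
theorem affine_finite_type_points_equiv_degree_four_hypersurface
    (X : Scheme) [IsAffine X] (pX : X ⟶ Spec (CommRingCat.of ℚ))
    (hft : LocallyOfFiniteType pX) (hqc : QuasiCompact pX) :
    ∃ (n : ℕ) (g : MvPolynomial (Fin n) ℚ), g.totalDegree = 4 ∧
      Nonempty ({t : Spec (CommRingCat.of ℚ) ⟶ X // t ≫ pX = 𝟙 _}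
        ≃ {y : Fin n → ℚ // eval y g = 0}) :=
  affine_finite_type_points_equiv_degree_four_hypersurface_general X pX hft
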